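/- Let (G, M, I) be a finite formal context with closure index CI. Then the number |C| of closed itemsets of (G, M, I) satisfies |C| ≥ 2^{CI}. -/
import Mathlib


/-- The extent `B'` of an itemset: objects having all attributes of `B`. -/
abbrev extentOf {G M : Type*} [Fintype G] (I : G → M → Prop) [∀ g m, Decidable (I g m)]
    (B : Finset M) : Finset G :=
  Finset.univ.filter fun g => ∀ m ∈ B, I g m

/-- The intent `A'` of a set of objects: attributes shared by all objects of `A`. -/
abbrev intentOf {G M : Type*} [Fintype M] (I : G → M → Prop) [∀ g m, Decidable (I g m)]
    (A : Finset G) : Finset M :=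
  Finset.univ.filter fun m => ∀ g ∈ A, I g m

/-- The closure `B''` of an itemset. -/
abbrev closureOf {G M : Type*} [Fintype G] [Fintype M] (I : G → M → Prop) [∀ g m, Decidable (I g m)]
    (B : Finset M) : Finset M :=
  intentOf I (extentOf I B)

/-- An itemset is closed when `B'' = B`. -/
abbrev isClosedItemset {G M : Type*} [Fintype G] [Fintype M] (I : G → M → Prop) [∀ g m, Decidable (I g m)]
    (B : Finset M) : Prop :=
  closureOf I B = B

/-- A key: every proper subset has a different extent. -/
abbrev isKey {G M : Type*} [Fintype G] (I : G → M → Prop) [∀ g m, Decidable (I g m)]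
    (X : Finset M) : Prop :=
  ∀ Y : Finset M, Y ⊂ X → extentOf I Y ≠ extentOf I X

/-- A passkey: a key of minimum cardinality among the keys of the same closed itemset. -/
abbrev isPasskey {G M : Type*} [Fintype G] [Fintype M] (I : G → M → Prop) [∀ g m, Decidable (I g m)]
    (X : Finset M) : Prop :=
  isKey I X ∧ ∀ Z : Finset M, isKey I Z → closureOf I Z = closureOf I X → X.card ≤ Z.card

/-- The closure level `C_k`: closed itemsets having a passkey of cardinality `k`. -/
abbrev closureLevel {G M : Type*} [Fintype G] [Fintype M] (I : G → M → Prop) [∀ g m, Decidable (I g m)]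
    (k : ℕ) : Set (Finset M) :=
  {B | isClosedItemset I B ∧ ∃ X : Finset M, isPasskey I X ∧ closureOf I X = B ∧ X.card = k}

section Aux
set_option linter.unusedSectionVars false
variable {G M : Type*} [Fintype G] [Fintype M] [DecidableEq G] [DecidableEq M] (I : G → M → Prop) [∀ g m, Decidable (I g m)]

lemma extent_anti {B C : Finset M} (h : B ⊆ C) : extentOf I C ⊆ extentOf I B := by
  intro g hg
  simp only [extentOf, Finset.mem_filter, Finset.mem_univ, true_and] at *
  exact fun m hm => hg m (h hm)

lemma subsetClosure (B : Finset M) : B ⊆ closureOf I B := by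
  intro m hm
  simp only [closureOf, intentOf, extentOf, Finset.mem_filter, Finset.mem_univ, true_and] at *
  exact fun g hg => hg m hm

lemma extent_closure (B : Finset M) : extentOf I (closureOf I B) = extentOf I B := by
  apply Finset.Subset.antisymm (extent_anti I (subsetClosure I B))
  intro g hg
  simp only [closureOf, intentOf, extentOf, Finset.mem_filter, Finset.mem_univ, true_and] at *
  intro m hm
  exact hm g hg

lemma closure_closed (B : Finset M) : isClosedItemset I (closureOf I B) := by
  simp only [isClosedItemset, closureOf, extent_closure I B]

lemma extent_union (Y Z : Finset M) :
    extentOf I (Y ∪ Z) = extentOf I Y ∩ extentOf I Z := by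
  ext g
  simp only [extentOf, Finset.mem_filter, Finset.mem_univ, true_and, Finset.mem_inter,
    Finset.mem_union]
  constructor
  · exact fun h => ⟨fun m hm => h m (Or.inl hm), fun m hm => h m (Or.inr hm)⟩
  · rintro ⟨h1, h2⟩ m (hm | hm)
    · exact h1 m hm
    · exact h2 m hm

lemma key_subsets_distinct {X : Finset M} (hX : isKey I X) {Y V : Finset M}
    (hYV : Y ⊂ V) (hVX : V ⊆ X) (heq : extentOf I Y = extentOf I V) : False := by
  have hX' : Y ∪ (X \ V) ⊂ X := by
    obtain ⟨m, hmV, hmY⟩ := Finset.exists_of_ssubset hYV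
    constructor
    · intro a ha
      rcases Finset.mem_union.mp ha with h | h
      · exact hVX (hYV.1 h)
      · exact (Finset.mem_sdiff.mp h).1
    · intro hsub
      have : m ∈ Y ∪ (X \ V) := hsub (hVX hmV)
      rcases Finset.mem_union.mp this with h | h
      · exact hmY h
      · exact (Finset.mem_sdiff.mp h).2 hmV
  apply hX _ hX'
  rw [extent_union, heq, ← extent_union]
  congr 1
  rw [Finset.union_sdiff_of_subset hVX]

lemma key_closure_injOn {X : Finset M} (hX : isKey I X) :
    Set.InjOn (closureOf I) ↑X.powerset := by
  intro Y hY Z hZ heq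
  simp only [Finset.coe_powerset, Set.mem_preimage, Set.mem_powerset_iff,
    Finset.coe_subset] at hY hZ
  have hext : extentOf I Y = extentOf I Z := by
    rw [← extent_closure I Y, ← extent_closure I Z, heq]
  by_contra hne
  rcases eq_or_ne (Y ∪ Z) Y with hu | hu
  · have hZY : Z ⊂ Y := lt_of_le_of_ne
      (by intro a ha; exact hu ▸ Finset.mem_union_right Y ha) (Ne.symm hne)
    exact key_subsets_distinct I hX hZY hY hext.symm
  · have hYu : Y ⊂ Y ∪ Z := lt_of_le_of_ne Finset.subset_union_left
      (Ne.symm hu)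
    have hYZ : extentOf I Y = extentOf I (Y ∪ Z) := by
      rw [extent_union, hext, Finset.inter_self]
    exact key_subsets_distinct I hX hYu (Finset.union_subset hY hZ) hYZ

end Aux

/-- If `CI` is the closure index (the largest `k` with `C_k` nonempty),
then the number of closed itemsets is at least `2 ^ CI`. -/
theorem closure_index_lower_bound {G M : Type*} [Fintype G] [Fintype M]
    (I : G → M → Prop) [∀ g m, Decidable (I g m)]
    (CI : ℕ) (hne : (closureLevel I CI).Nonempty)
    (hmax : ∀ k : ℕ, (closureLevel I k).Nonempty → k ≤ CI) :
    2 ^ CI ≤ {B : Finset M | isClosedItemset I B}.ncard := by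
  classical
  obtain ⟨B, hBclosed, X, ⟨hXkey, _⟩, hXB, hXcard⟩ := hne
  have hinj := key_closure_injOn I hXkey
  have himg : ↑((X.powerset).image (closureOf I)) ⊆ {B : Finset M | isClosedItemset I B} := by
    intro C hC
    simp only [Finset.coe_image, Set.mem_image, Finset.mem_coe] at hC
    obtain ⟨Y, _, rfl⟩ := hC
    exact closure_closed I Y
  calc 2 ^ CI = X.powerset.card := by rw [Finset.card_powerset, hXcard]
    _ = ((X.powerset).image (closureOf I)).card := (Finset.card_image_of_injOn
        (by simpa using hinj)).symm
    _ = (↑((X.powerset).image (closureOf I)) : Set (Finset M)).ncard := by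
        rw [Set.ncard_coe_finset]
    _ ≤ {B : Finset M | isClosedItemset I B}.ncard :=
        Set.ncard_le_ncard himg (Set.toFinite _)
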